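/- arXiv:2409.08405 — 2 statements merged into one kernel-verified Lean document; each statement's English description precedes it below -/
import Mathlib

section
/- Let G = (V, E_1, …, E_k) be a multilayer graph. The maximum of Σ_{i∈[k]} |S_i| − d_k(S_1,…,S_k) over all families of labelings S_i ⊆ E_i (i ∈ [k]) in which each S_i fulfills the STC for E_i equals the maximum of Σ_{i∈[k]} |S_i| over all such families that additionally satisfy d_k(S_1,…,S_k) = 0. -/
/-!
Removing from every layer the strong labels of edges that are weak in some layer keeps the STC
(it only shrinks the labelings) and leaves no disagreements. Each removed label `e ∈ S_i` is an
edge with `w(e) > 0`, so it is counted exactly once in `d_k = ∑_{w(e) > 0} s(e)`; hence the new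
family has size `∑ |S_i| - d_k`. Conversely a consistent family has value `∑ |S_i|`. So both sets
of attained values coincide.
-/

open Finset

def IsWedge {V : Type*} (E : Finset (Sym2 V)) (v u w : V) : Prop :=
  u ≠ v ∧ v ≠ w ∧ u ≠ w ∧ s(u, v) ∈ E ∧ s(v, w) ∈ E ∧ s(u, w) ∉ E

def FulfillsSTC {V : Type*} (E S : Finset (Sym2 V)) : Prop :=
  ∀ u v w : V, u ≠ v → v ≠ w → u ≠ w → s(u, v) ∈ S → s(v, w) ∈ S → s(u, w) ∈ E

/-- `s(e)`: the number of layers in which `e` is labeled strong. -/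
def sCount {V : Type*} [DecidableEq V] {k : ℕ} (Ss : Fin k → Finset (Sym2 V))
    (e : Sym2 V) : ℕ :=
  (Finset.univ.filter fun i => e ∈ Ss i).card

/-- `w(e)`: the number of layers in which `e` is labeled weak. -/
def wCount {V : Type*} [DecidableEq V] {k : ℕ} (Es Ss : Fin k → Finset (Sym2 V))
    (e : Sym2 V) : ℕ :=
  (Finset.univ.filter fun i => e ∈ Es i ∧ e ∉ Ss i).card

/-- `d_k(S_1, …, S_k) = ∑_{e ∈ E, w(e) > 0} s(e)`: the number of disagreements. -/
def disagree {V : Type*} [DecidableEq V] {k : ℕ} (Es Ss : Fin k → Finset (Sym2 V)) : ℕ :=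
  ∑ e ∈ (Finset.univ.biUnion Es).filter (fun e => 0 < wCount Es Ss e), sCount Ss e

theorem FulfillsSTC.mono {V : Type*} {E S T : Finset (Sym2 V)} (hS : FulfillsSTC E S)
    (hTS : T ⊆ S) : FulfillsSTC E T :=
  fun u v w huv hvw huw hu hw => hS u v w huv hvw huw (hTS hu) (hTS hw)

section Multilayer

variable {V : Type*} [DecidableEq V] {k : ℕ} (Es Ss : Fin k → Finset (Sym2 V))

theorem wCount_eq_zero_iff {e : Sym2 V} : wCount Es Ss e = 0 ↔ ∀ i, e ∈ Es i → e ∈ Ss i := by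
  simp [wCount, filter_eq_empty_iff]

def consistentPart (i : Fin k) : Finset (Sym2 V) :=
  (Ss i).filter fun e => wCount Es Ss e = 0

theorem consistentPart_subset (i : Fin k) : consistentPart Es Ss i ⊆ Ss i :=
  filter_subset _ _

theorem disagree_consistentPart : disagree Es (consistentPart Es Ss) = 0 := by
  refine sum_eq_zero fun e he => card_eq_zero.mpr <| filter_eq_empty_iff.mpr fun i _ hi => ?_
  have hw : wCount Es Ss e = 0 := (mem_filter.mp hi).2
  have hw' : wCount Es (consistentPart Es Ss) e = 0 :=
    (wCount_eq_zero_iff _ _).mpr fun j hj =>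
      mem_filter.mpr ⟨(wCount_eq_zero_iff _ _).mp hw j hj, hw⟩
  exact (mem_filter.mp he).2.ne' hw'

theorem disagree_eq_sum_card (hsub : ∀ i, Ss i ⊆ Es i) :
    disagree Es Ss = ∑ i, ((Ss i).filter fun e => 0 < wCount Es Ss e).card := by
  simp only [disagree, sCount, card_filter]
  rw [sum_comm]
  refine sum_congr rfl fun i _ => ?_
  rw [← card_filter, ← card_filter]
  congr 1
  ext e
  simp only [mem_filter, mem_biUnion, mem_univ, true_and]
  exact ⟨fun ⟨⟨_, hw⟩, hs⟩ => ⟨hs, hw⟩, fun ⟨hs, hw⟩ => ⟨⟨⟨i, hsub i hs⟩, hw⟩, hs⟩⟩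

theorem sum_card_consistentPart_add_disagree (hsub : ∀ i, Ss i ⊆ Es i) :
    ∑ i, (consistentPart Es Ss i).card + disagree Es Ss = ∑ i, (Ss i).card := by
  simp only [disagree_eq_sum_card Es Ss hsub, ← sum_add_distrib, Nat.pos_iff_ne_zero]
  exact sum_congr rfl fun i _ => card_filter_add_card_filter_not _

end Multilayer

/-- The maximum of `∑_i |S_i| − d_k(S_1, …, S_k)` over all families of labelings each
fulfilling the STC equals the maximum of `∑_i |S_i|` over all such families with no
disagreements. -/
theorem max_multilayer_stc_eq_max_consistent {V : Type*} [DecidableEq V] {k : ℕ}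
    (Es : Fin k → Finset (Sym2 V)) :
    sSup {n : ℕ | ∃ Ss : Fin k → Finset (Sym2 V),
        (∀ i, Ss i ⊆ Es i) ∧ (∀ i, FulfillsSTC (Es i) (Ss i)) ∧
        n = (∑ i : Fin k, (Ss i).card) - disagree Es Ss}
      = sSup {n : ℕ | ∃ Ss : Fin k → Finset (Sym2 V),
        (∀ i, Ss i ⊆ Es i) ∧ (∀ i, FulfillsSTC (Es i) (Ss i)) ∧
        disagree Es Ss = 0 ∧ n = ∑ i : Fin k, (Ss i).card} := by
  congr 1
  ext n
  constructor
  · rintro ⟨Ss, hsub, hstc, rfl⟩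
    refine ⟨consistentPart Es Ss, fun i => (consistentPart_subset Es Ss i).trans (hsub i),
      fun i => (hstc i).mono (consistentPart_subset Es Ss i), disagree_consistentPart Es Ss, ?_⟩
    have := sum_card_consistentPart_add_disagree Es Ss hsub
    omega
  · rintro ⟨Ss, hsub, hstc, hd, rfl⟩
    exact ⟨Ss, hsub, hstc, by rw [hd, Nat.sub_zero]⟩
end

section
/- Let G = (V, E_1, …, E_k) be a multilayer graph, W its combined weighted wedge graph, and α ≥ 1. If C is a vertex cover of W whose weight is at most α times the minimum weight of a vertex cover of W, then the labelings S_i = E_i ∖ { e ∈ E_i : n_e ∈ C } each fulfill the STC for E_i and satisfy Σ_{i∈[k]} |E_i∖S_i| + d_k(S_1,…,S_k) ≤ α · OPT, where OPT is the minimum of Σ_{i∈[k]} |E_i∖S'_i| + d_k(S'_1,…,S'_k) over all families of labelings S'_i ⊆ E_i each fulfilling the STC for E_i. -/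
open Finset

/-- `C` (a set of vertices `n_e`, identified with the corresponding edges `e`) is a
vertex cover of the combined wedge graph `W` of the multilayer graph: in `W`,
`n_{uv}` and `n_{vw}` are adjacent iff `(v,{u,w})` is a wedge of some layer `E_i`,
and a vertex cover contains at least one endpoint of every edge. -/
def IsCombinedWedgeGraphVC {V : Type*} {k : ℕ} (Es : Fin k → Finset (Sym2 V))
    (C : Finset (Sym2 V)) : Prop :=
  ∀ i : Fin k, ∀ v u w : V, IsWedge (Es i) v u w → s(u, v) ∈ C ∨ s(v, w) ∈ C

/-- The weight `w(n_e) = |{i ∈ [k] : e ∈ E_i}|` of the vertex `n_e` of the combined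
weighted wedge graph. -/
def wedgeWeight {V : Type*} [DecidableEq V] {k : ℕ} (Es : Fin k → Finset (Sym2 V))
    (e : Sym2 V) : ℕ :=
  (Finset.univ.filter fun i => e ∈ Es i).card

/-!
Read a labeling family backwards: an edge that is weak in at least one layer costs exactly its
weight `w(n_e) = w(e) + s(e)` in the objective, and the STC in every layer says that every wedge
has a weak edge, i.e. that the weakly labeled edges form a vertex cover of `W`. Hence
`OPT_VC(W) ≤ OPT`. Conversely, making the edges of a vertex cover `C` weak and all others strong
satisfies the STC and costs at most the weight of `C`, which is at most `α · OPT_VC(W)`.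
-/

section

variable {V : Type*} [DecidableEq V] {k : ℕ}

theorem FulfillsSTC.notMem_or_notMem_of_isWedge {E S : Finset (Sym2 V)} (hS : FulfillsSTC E S)
    {v u w : V} (hw : IsWedge E v u w) : s(u, v) ∉ S ∨ s(v, w) ∉ S := by
  obtain ⟨huv, hvw, huw, -, -, hnot⟩ := hw
  by_contra! h
  exact hnot (hS u v w huv hvw huw h.1 h.2)

theorem fulfillsSTC_of_forall_isWedge {E S : Finset (Sym2 V)} (hSE : S ⊆ E)
    (hS : ∀ v u w, IsWedge E v u w → s(u, v) ∉ S ∨ s(v, w) ∉ S) : FulfillsSTC E S := by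
  intro u v w huv hvw huw huvS hvwS
  by_contra hnot
  rcases hS v u w ⟨huv, hvw, huw, hSE huvS, hSE hvwS, hnot⟩ with h | h <;> contradiction

theorem IsCombinedWedgeGraphVC.fulfillsSTC_sdiff {Es : Fin k → Finset (Sym2 V)}
    {C : Finset (Sym2 V)} (hC : IsCombinedWedgeGraphVC Es C) (i : Fin k) :
    FulfillsSTC (Es i) (Es i \ (Es i).filter (· ∈ C)) := by
  refine fulfillsSTC_of_forall_isWedge sdiff_subset fun v u w hw => ?_
  simp only [← filter_not, mem_filter, not_and, not_not]
  rcases hC i v u w hw with h | h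
  · exact .inl fun _ => h
  · exact .inr fun _ => h

def weakEdges (Es Ss : Fin k → Finset (Sym2 V)) : Finset (Sym2 V) :=
  (univ.biUnion Es).filter (0 < wCount Es Ss ·)

theorem mem_weakEdges {Es Ss : Fin k → Finset (Sym2 V)} {e : Sym2 V} :
    e ∈ weakEdges Es Ss ↔ ∃ i, e ∈ Es i ∧ e ∉ Ss i := by
  simp only [weakEdges, wCount, mem_filter, mem_biUnion, mem_univ, true_and, card_pos,
    filter_nonempty_iff]
  exact ⟨fun h => h.2, fun ⟨i, hi⟩ => ⟨⟨i, hi.1⟩, i, hi⟩⟩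

theorem isCombinedWedgeGraphVC_weakEdges {Es Ss : Fin k → Finset (Sym2 V)}
    (hS : ∀ i, FulfillsSTC (Es i) (Ss i)) : IsCombinedWedgeGraphVC Es (weakEdges Es Ss) := by
  intro i v u w hw
  rcases (hS i).notMem_or_notMem_of_isWedge hw with h | h
  · exact .inl (mem_weakEdges.2 ⟨i, hw.2.2.2.1, h⟩)
  · exact .inr (mem_weakEdges.2 ⟨i, hw.2.2.2.2.1, h⟩)

theorem sum_card_sdiff_eq_sum_wCount (Es Ss : Fin k → Finset (Sym2 V)) :
    ∑ i, (Es i \ Ss i).card = ∑ e ∈ univ.biUnion Es, wCount Es Ss e := by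
  have hlayer : ∀ i, Es i \ Ss i
      = (univ.biUnion Es).bipartiteAbove (fun i e => e ∈ Es i ∧ e ∉ Ss i) i := by
    intro i
    ext e
    simp only [bipartiteAbove, mem_sdiff, mem_filter, mem_biUnion, mem_univ, true_and]
    exact ⟨fun h => ⟨⟨i, h.1⟩, h⟩, fun h => h.2⟩
  simp only [hlayer]
  exact sum_card_bipartiteAbove_eq_sum_card_bipartiteBelow _

theorem wedgeWeight_eq_wCount_add_sCount {Es Ss : Fin k → Finset (Sym2 V)}
    (hSE : ∀ i, Ss i ⊆ Es i) (e : Sym2 V) :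
    wedgeWeight Es e = wCount Es Ss e + sCount Ss e := by
  have hs : univ.filter (e ∈ Ss ·) = (univ.filter (e ∈ Es ·)).filter (e ∈ Ss ·) := by
    rw [filter_filter]
    exact filter_congr fun i _ => ⟨fun h => ⟨hSE i h, h⟩, And.right⟩
  rw [wedgeWeight, wCount, sCount, hs, ← filter_filter, add_comm]
  exact (card_filter_add_card_filter_not _).symm

theorem sum_card_sdiff_add_disagree {Es Ss : Fin k → Finset (Sym2 V)} (hSE : ∀ i, Ss i ⊆ Es i) :
    ∑ i, (Es i \ Ss i).card + disagree Es Ss = ∑ e ∈ weakEdges Es Ss, wedgeWeight Es e := by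
  have hw : ∑ e ∈ univ.biUnion Es, wCount Es Ss e = ∑ e ∈ weakEdges Es Ss, wCount Es Ss e :=
    (sum_filter_of_ne fun _ _ h => Nat.pos_of_ne_zero h).symm
  rw [sum_card_sdiff_eq_sum_wCount, disagree, hw, ← weakEdges, ← sum_add_distrib]
  exact sum_congr rfl fun e _ => (wedgeWeight_eq_wCount_add_sCount hSE e).symm

theorem weakEdges_sdiff_subset (Es : Fin k → Finset (Sym2 V)) (C : Finset (Sym2 V)) :
    weakEdges Es (fun i => Es i \ (Es i).filter (· ∈ C)) ⊆ C := by
  intro e he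
  obtain ⟨i, hei, hnot⟩ := mem_weakEdges.1 he
  simp only [← filter_not, mem_filter, not_and, not_not] at hnot
  exact hnot hei

theorem sInf_vertexCover_le_sInf_stc (Es : Fin k → Finset (Sym2 V)) :
    sInf {n : ℕ | ∃ C : Finset (Sym2 V),
        C ⊆ univ.biUnion Es ∧ IsCombinedWedgeGraphVC Es C ∧ n = ∑ e ∈ C, wedgeWeight Es e} ≤
      sInf {n : ℕ | ∃ Ss : Fin k → Finset (Sym2 V),
        (∀ i, Ss i ⊆ Es i) ∧ (∀ i, FulfillsSTC (Es i) (Ss i)) ∧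
        n = ∑ i, (Es i \ Ss i).card + disagree Es Ss} := by
  have hempty : ∀ i, FulfillsSTC (Es i) ∅ := fun _ _ _ _ _ _ _ h => absurd h (notMem_empty _)
  refine le_csInf ⟨_, _, fun _ => empty_subset _, hempty, rfl⟩ ?_
  rintro _ ⟨Ss, hSE, hS, rfl⟩
  exact Nat.sInf_le ⟨weakEdges Es Ss, filter_subset _ _, isCombinedWedgeGraphVC_weakEdges hS,
    sum_card_sdiff_add_disagree hSE⟩

end

theorem approx_vc_gives_approx_stc_general {V : Type*} [DecidableEq V] {k : ℕ}
    (Es : Fin k → Finset (Sym2 V)) (C : Finset (Sym2 V)) (α : ℝ) (hα : 1 ≤ α)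
    (hC : IsCombinedWedgeGraphVC Es C)
    (happrox : (∑ e ∈ C, wedgeWeight Es e : ℝ) ≤
      α * (sInf {n : ℕ | ∃ C' : Finset (Sym2 V),
        C' ⊆ Finset.univ.biUnion Es ∧ IsCombinedWedgeGraphVC Es C' ∧
        n = ∑ e ∈ C', wedgeWeight Es e} : ℕ)) :
    let Ss : Fin k → Finset (Sym2 V) := fun i => Es i \ (Es i).filter (fun e => e ∈ C)
    (∀ i, FulfillsSTC (Es i) (Ss i)) ∧
      ((∑ i : Fin k, (Es i \ Ss i).card) + disagree Es Ss : ℝ) ≤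
        α * (sInf {n : ℕ | ∃ Ss' : Fin k → Finset (Sym2 V),
          (∀ i, Ss' i ⊆ Es i) ∧ (∀ i, FulfillsSTC (Es i) (Ss' i)) ∧
          n = (∑ i : Fin k, (Es i \ Ss' i).card) + disagree Es Ss'} : ℕ) := by
  intro Ss
  refine ⟨hC.fulfillsSTC_sdiff, ?_⟩
  have hcost : ∑ i, (Es i \ Ss i).card + disagree Es Ss ≤ ∑ e ∈ C, wedgeWeight Es e := by
    rw [sum_card_sdiff_add_disagree fun i => sdiff_subset]
    exact sum_le_sum_of_subset (weakEdges_sdiff_subset Es C)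
  calc ((∑ i, (Es i \ Ss i).card) + disagree Es Ss : ℝ)
      ≤ ∑ e ∈ C, (wedgeWeight Es e : ℝ) := by exact_mod_cast hcost
    _ ≤ _ := happrox
    _ ≤ α * (sInf _ : ℕ) := mul_le_mul_of_nonneg_left
      (by exact_mod_cast sInf_vertexCover_le_sInf_stc Es) (by linarith)

/-- An `α`-approximate vertex cover `C` of the combined weighted wedge graph yields
labelings `S_i = E_i ∖ {e ∈ E_i : n_e ∈ C}` that fulfill the STC in every layer and
whose objective value is at most `α · OPT`, where `OPT` is the optimum of
MinMultiLayerSTC. -/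
theorem approx_vc_gives_approx_stc {V : Type*} [DecidableEq V] {k : ℕ}
    (Es : Fin k → Finset (Sym2 V)) (C : Finset (Sym2 V)) (α : ℝ) (hα : 1 ≤ α)
    (hCsub : C ⊆ Finset.univ.biUnion Es) (hC : IsCombinedWedgeGraphVC Es C)
    (happrox : (∑ e ∈ C, wedgeWeight Es e : ℝ) ≤
      α * (sInf {n : ℕ | ∃ C' : Finset (Sym2 V),
        C' ⊆ Finset.univ.biUnion Es ∧ IsCombinedWedgeGraphVC Es C' ∧
        n = ∑ e ∈ C', wedgeWeight Es e} : ℕ)) :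
    let Ss : Fin k → Finset (Sym2 V) := fun i => Es i \ (Es i).filter (fun e => e ∈ C)
    (∀ i, FulfillsSTC (Es i) (Ss i)) ∧
      ((∑ i : Fin k, (Es i \ Ss i).card) + disagree Es Ss : ℝ) ≤
        α * (sInf {n : ℕ | ∃ Ss' : Fin k → Finset (Sym2 V),
          (∀ i, Ss' i ⊆ Es i) ∧ (∀ i, FulfillsSTC (Es i) (Ss' i)) ∧
          n = (∑ i : Fin k, (Es i \ Ss' i).card) + disagree Es Ss'} : ℕ) :=
  approx_vc_gives_approx_stc_general Es C α hα hC happrox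
end
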